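/- Let m ≥ 1, d ≥ 1. The number of pairs (s,p) with s ∈ {0,1,...,2^m - 1}^d, p ∈ M_m^d for which Ω_m(s,p) is nonempty is at most exp(m·2^m · log(2^{m+3} d)). -/

import Mathlib

def OmegaNonempty (m d : ℕ) (s : Fin d → ℕ) (p : Fin d → ℝ) : Prop :=
  ∃ a b : Fin d → ℝ,
    (∀ ℓ, 0 ≤ a ℓ ∧ a ℓ ≤ b ℓ ∧ b ℓ ≤ 1) ∧
    ((2 : ℝ) ^ m)⁻¹ < ∏ ℓ, (b ℓ - a ℓ) ∧
    ∀ ℓ, (s ℓ : ℝ) / 2 ^ m < b ℓ - a ℓ ∧ b ℓ - a ℓ ≤ ((s ℓ : ℝ) + 1) / 2 ^ m ∧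
      p ℓ - ((2 : ℝ) ^ m)⁻¹ ≤ a ℓ ∧ a ℓ < p ℓ

/-!
A box in `Ω_m(s, p)` has volume `> 2^{-m}`, while each side `ℓ` with
`(s_ℓ, p_ℓ) ≠ (2^m - 1, 2^{-m})` has length at most `1 - 2^{-m}`: either `s_ℓ ≤ 2^m - 2`,
or the side starts at `inf I_ℓ ≥ 2^{-m}`.
As `(1 - 2^{-m})^{m 2^m} ≤ e^{-m} ≤ 2^{-m}`, fewer than `K = m 2^m` coordinates are nontrivial.
The pairs `(s_ℓ, p_ℓ)` range over a set of size `4^m`, so there are at most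
`∑_{j ≤ K} C(d, j) 4^{mj} ≤ ∑_{j ≤ K} (4^m d)^j / j! ≤ (e 4^m d / K)^K ≤ (2^{m+3} d)^K`
admissible `(s, p)`.
-/

open Finset Nat

theorem Finset.prod_le_pow_card_filter {ι R : Type*} [Fintype ι] [CommSemiring R]
    [PartialOrder R] [IsOrderedRing R] {x : ι → R} {P : ι → Prop} [DecidablePred P] {c : R}
    (hx0 : ∀ i, 0 ≤ x i) (hx1 : ∀ i, x i ≤ 1) (hc : ∀ i, P i → x i ≤ c) :
    ∏ i, x i ≤ c ^ #{i | P i} :=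
  calc ∏ i, x i ≤ ∏ i with P i, x i :=
        prod_le_prod_of_subset_of_le_one (subset_univ _) (fun i _ ↦ hx0 i) (fun i _ _ ↦ hx1 i)
    _ ≤ ∏ i with P i, c := prod_le_prod (fun i _ ↦ hx0 i) (fun i hi ↦ hc i (mem_filter.1 hi).2)
    _ = c ^ #{i | P i} := prod_const c

theorem one_sub_inv_pow_mul_le (m : ℕ) {n : ℕ} (hn : 1 ≤ n) :
    (1 - (n : ℝ)⁻¹) ^ (m * n) ≤ ((2 : ℝ) ^ m)⁻¹ := by
  have hexp : (1 - (n : ℝ)⁻¹) ^ n ≤ 2⁻¹ := by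
    have h := Real.one_sub_div_pow_le_exp_neg (n := n) (t := 1) (by exact_mod_cast hn)
    rw [one_div] at h
    refine h.trans ?_
    rw [Real.exp_neg, inv_le_inv₀ (Real.exp_pos 1) two_pos]
    linarith [Real.exp_one_gt_d9]
  have h0 : 0 ≤ 1 - (n : ℝ)⁻¹ := sub_nonneg.2 (inv_le_one_of_one_le₀ (by exact_mod_cast hn))
  rw [mul_comm, pow_mul, ← inv_pow]
  exact pow_le_pow_left₀ (pow_nonneg h0 n) hexp m

theorem sub_le_one_sub_inv {N s q : ℕ} {a b : ℝ} (hs : s < N) (hq : 1 ≤ q)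
    (hsq : (s, q) ≠ (N - 1, 1)) (hb : b ≤ 1) (hba : b - a ≤ (s + 1) / N)
    (ha : q / N - (N : ℝ)⁻¹ ≤ a) : b - a ≤ 1 - (N : ℝ)⁻¹ := by
  have hN : (0 : ℝ) < N := by exact_mod_cast (Nat.zero_lt_of_lt hs)
  by_cases hsN : s = N - 1
  · have hq2 : (2 : ℝ) ≤ q := by
      have : q ≠ 1 := fun h ↦ hsq (by rw [hsN, h])
      exact_mod_cast (show 2 ≤ q by omega)
    have : (N : ℝ)⁻¹ ≤ a := by
      refine le_trans ?_ ha
      rw [div_eq_mul_inv]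
      nlinarith [inv_pos.2 hN]
    linarith
  · have hs1 : (s : ℝ) + 1 ≤ N - 1 := by
      have : s + 1 + 1 ≤ N := by omega
      have : ((s + 1 + 1 : ℕ) : ℝ) ≤ N := by exact_mod_cast this
      push_cast at this
      linarith
    calc b - a ≤ (s + 1) / N := hba
      _ ≤ (N - 1) / N := by gcongr
      _ = 1 - (N : ℝ)⁻¹ := by field_simp

theorem card_ne_lt_of_omegaNonempty {m d : ℕ} {s q : Fin d → ℕ} (hs : ∀ ℓ, s ℓ < 2 ^ m)
    (hq : ∀ ℓ, 1 ≤ q ℓ) (h : OmegaNonempty m d s fun ℓ ↦ (q ℓ : ℝ) / 2 ^ m) :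
    #{ℓ | (s ℓ, q ℓ) ≠ (2 ^ m - 1, 1)} < m * 2 ^ m := by
  obtain ⟨a, b, hab, hvol, hsp⟩ := h
  have hN : ((2 ^ m : ℕ) : ℝ) = 2 ^ m := by norm_cast
  have hside : ∀ ℓ, (s ℓ, q ℓ) ≠ (2 ^ m - 1, 1) → b ℓ - a ℓ ≤ 1 - ((2 : ℝ) ^ m)⁻¹ := by
    intro ℓ hℓ
    have := sub_le_one_sub_inv (a := a ℓ) (b := b ℓ) (hs ℓ) (hq ℓ) hℓ (hab ℓ).2.2
    rw [hN] at this
    exact this (hsp ℓ).2.1 (hsp ℓ).2.2.1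
  refine lt_of_not_ge fun hT ↦ lt_irrefl ((2 : ℝ) ^ m)⁻¹ ?_
  have hε : 0 ≤ 1 - ((2 : ℝ) ^ m)⁻¹ := sub_nonneg.2 (inv_le_one_of_one_le₀ (one_le_pow₀ one_le_two))
  have hε1 : 1 - ((2 : ℝ) ^ m)⁻¹ ≤ 1 := sub_le_self _ (by positivity)
  calc ((2 : ℝ) ^ m)⁻¹ < ∏ ℓ, (b ℓ - a ℓ) := hvol
    _ ≤ (1 - ((2 : ℝ) ^ m)⁻¹) ^ #{ℓ | (s ℓ, q ℓ) ≠ (2 ^ m - 1, 1)} :=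
      prod_le_pow_card_filter (fun ℓ ↦ sub_nonneg.2 (hab ℓ).2.1)
        (fun ℓ ↦ by linarith [(hab ℓ).1, (hab ℓ).2.2]) hside
    _ ≤ (1 - ((2 : ℝ) ^ m)⁻¹) ^ (m * 2 ^ m) := pow_le_pow_of_le_one hε hε1 hT
    _ ≤ ((2 : ℝ) ^ m)⁻¹ := by
      have := one_sub_inv_pow_mul_le m (n := 2 ^ m) Nat.one_le_two_pow
      rwa [hN] at this

theorem card_piFinset_ite_univ_singleton {ι V : Type*} [Fintype ι] [DecidableEq ι] [Fintype V]
    (T : Finset ι) (v₀ : V) :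
    #(Fintype.piFinset fun i ↦ if i ∈ T then univ else {v₀}) = Fintype.card V ^ #T := by
  simp [Fintype.card_piFinset, apply_ite, prod_ite_mem]

theorem card_filter_card_ne_le {ι V : Type*} [Fintype ι] [DecidableEq ι] [Fintype V]
    [DecidableEq V] (v₀ : V) (K : ℕ) :
    #{f : ι → V | #{i | f i ≠ v₀} ≤ K} ≤
      ∑ j ∈ range (K + 1), (Fintype.card ι).choose j * Fintype.card V ^ j := by
  have hsub : ({f : ι → V | #{i | f i ≠ v₀} ≤ K} : Finset (ι → V)) ⊆ (range (K + 1)).biUnion fun j ↦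
      (powersetCard j univ).biUnion fun T ↦
        Fintype.piFinset fun i ↦ if i ∈ T then univ else {v₀} := by
    intro f hf
    simp only [mem_filter, mem_univ, true_and] at hf
    simp only [mem_biUnion, mem_range, mem_powersetCard, subset_univ, true_and,
      Fintype.mem_piFinset]
    refine ⟨_, Nat.lt_succ_of_le hf, _, rfl, fun i ↦ ?_⟩
    by_cases hi : f i = v₀ <;> simp [hi]
  calc _ ≤ _ := card_le_card hsub
    _ ≤ ∑ j ∈ range (K + 1), ∑ T ∈ powersetCard j (univ : Finset ι),
          #(Fintype.piFinset fun i ↦ if i ∈ T then univ else {v₀}) :=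
      card_biUnion_le.trans (sum_le_sum fun _ _ ↦ card_biUnion_le)
    _ = ∑ j ∈ range (K + 1), (Fintype.card ι).choose j * Fintype.card V ^ j := by
      refine sum_congr rfl fun j _ ↦ ?_
      rw [sum_congr rfl fun T hT ↦ by
        rw [card_piFinset_ite_univ_singleton, (mem_powersetCard.1 hT).2]]
      simp

theorem sum_pow_div_factorial_le {A : ℝ} {K : ℕ} (hK : 0 < K) (hKA : K ≤ A) :
    ∑ j ∈ range (K + 1), A ^ j / j ! ≤ (Real.exp 1 * A / K) ^ K := by
  have hK' : (0 : ℝ) < K := by exact_mod_cast hK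
  have hAK : 1 ≤ A / K := (one_le_div hK').2 hKA
  calc ∑ j ∈ range (K + 1), A ^ j / j !
      = ∑ j ∈ range (K + 1), (A / K) ^ j * ((K : ℝ) ^ j / j !) := by
        refine sum_congr rfl fun j _ ↦ ?_
        rw [div_pow]; field_simp
    _ ≤ ∑ j ∈ range (K + 1), (A / K) ^ K * ((K : ℝ) ^ j / j !) :=
        sum_le_sum fun j hj ↦ mul_le_mul_of_nonneg_right
          (pow_le_pow_right₀ hAK (Nat.lt_succ_iff.1 (mem_range.1 hj))) (by positivity)
    _ ≤ (A / K) ^ K * Real.exp K := by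
        rw [← mul_sum]
        exact mul_le_mul_of_nonneg_left (Real.sum_le_exp_of_nonneg hK'.le _) (by positivity)
    _ = (Real.exp 1 * A / K) ^ K := by
        rw [← Real.exp_one_pow, mul_div_assoc, mul_pow, mul_comm]

theorem sum_choose_mul_pow_le {d K : ℕ} {x : ℝ} (hx : 0 ≤ x) (hK : 0 < K) (hKx : K ≤ d * x) :
    ∑ j ∈ range (K + 1), (d.choose j : ℝ) * x ^ j ≤ (Real.exp 1 * (d * x) / K) ^ K :=
  calc ∑ j ∈ range (K + 1), (d.choose j : ℝ) * x ^ j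
      ≤ ∑ j ∈ range (K + 1), (d * x) ^ j / j ! :=
        sum_le_sum fun j _ ↦ by
          rw [mul_pow, mul_div_right_comm]
          exact mul_le_mul_of_nonneg_right (choose_le_pow_div j d) (pow_nonneg hx j)
    _ ≤ _ := sum_pow_div_factorial_le hK hKx

theorem sum_choose_mul_pow_le_exp {m d : ℕ} (hm : 1 ≤ m) (hd : 1 ≤ d) :
    ∑ j ∈ range (m * 2 ^ m + 1), (d.choose j : ℝ) * (2 ^ m * 2 ^ m) ^ j ≤
      Real.exp (m * 2 ^ m * Real.log (2 ^ (m + 3) * d)) := by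
  have hm' : (1 : ℝ) ≤ m := by exact_mod_cast hm
  have hmN : (m : ℝ) ≤ 2 ^ m := by exact_mod_cast Nat.lt_two_pow_self.le
  have hK : ((m * 2 ^ m : ℕ) : ℝ) ≤ d * (2 ^ m * 2 ^ m) := by
    push_cast
    calc (m : ℝ) * 2 ^ m ≤ 2 ^ m * 2 ^ m := by gcongr
      _ ≤ d * (2 ^ m * 2 ^ m) := le_mul_of_one_le_left (by positivity) (by exact_mod_cast hd)
  have hbase : Real.exp 1 * (d * (2 ^ m * 2 ^ m)) / (m * 2 ^ m : ℕ) ≤ 2 ^ (m + 3) * d := by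
    rw [div_le_iff₀ (by positivity)]
    have he : Real.exp 1 ≤ 8 * m := by linarith [Real.exp_one_lt_d9]
    calc Real.exp 1 * (d * (2 ^ m * 2 ^ m)) ≤ 8 * m * (d * (2 ^ m * 2 ^ m)) := by gcongr
      _ = 2 ^ (m + 3) * d * (m * 2 ^ m : ℕ) := by push_cast; ring
  calc _ ≤ (Real.exp 1 * (d * (2 ^ m * 2 ^ m)) / (m * 2 ^ m : ℕ)) ^ (m * 2 ^ m) :=
        sum_choose_mul_pow_le (by positivity) (by positivity) hK
    _ ≤ (2 ^ (m + 3) * d) ^ (m * 2 ^ m) := pow_le_pow_left₀ (by positivity) hbase _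
    _ = Real.exp (m * 2 ^ m * Real.log (2 ^ (m + 3) * d)) := by
        rw [← Real.exp_log (show (0 : ℝ) < 2 ^ (m + 3) * d by positivity), ← Real.exp_nat_mul,
          Real.log_exp]
        push_cast
        rfl

/-- The number of pairs `(s,p)`, `s ∈ {0,…,2^m-1}^d`, `p ∈ M_m^d` (encoded by
`q ∈ {1,…,2^m-1}^d`, `p = q/2^m`), with `Ω_m(s,p) ≠ ∅` is at most
`exp(m·2^m·log(2^{m+3}·d))`. -/
theorem stmt_14 (m d : ℕ) (hm : 1 ≤ m) (hd : 1 ≤ d) :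
    (Set.ncard {sq : (Fin d → Fin (2 ^ m)) × (Fin d → Fin (2 ^ m)) |
        (∀ ℓ, 1 ≤ (sq.2 ℓ : ℕ)) ∧
        OmegaNonempty m d (fun ℓ => (sq.1 ℓ : ℕ))
          (fun ℓ => ((sq.2 ℓ : ℕ) : ℝ) / 2 ^ m)} : ℝ) ≤
      Real.exp ((m : ℝ) * 2 ^ m * Real.log (2 ^ (m + 3) * (d : ℝ))) := by
  have hN : 1 < 2 ^ m := Nat.one_lt_two_pow (by omega)
  let v₀ : Fin (2 ^ m) × Fin (2 ^ m) := (⟨2 ^ m - 1, by omega⟩, ⟨1, hN⟩)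
  let pair := (Equiv.arrowProdEquivProdArrow (Fin d) (fun _ ↦ Fin (2 ^ m)) fun _ ↦ Fin (2 ^ m)).symm
  let A : Finset (Fin d → Fin (2 ^ m) × Fin (2 ^ m)) := {f | #{ℓ | f ℓ ≠ v₀} ≤ m * 2 ^ m}
  calc _ ≤ (#A : ℝ) := by
        rw [← Set.ncard_coe_finset]
        refine Nat.cast_le.2 (Set.ncard_le_ncard_of_injOn pair (fun sq hsq ↦ ?_)
          pair.injective.injOn)
        have := (card_ne_lt_of_omegaNonempty (fun ℓ ↦ (sq.1 ℓ).isLt) hsq.1 hsq.2).le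
        simpa [A, pair, v₀, Prod.ext_iff, Fin.ext_iff] using this
    _ ≤ ∑ j ∈ range (m * 2 ^ m + 1), (d.choose j : ℝ) * (2 ^ m * 2 ^ m) ^ j := by
      have := card_filter_card_ne_le (ι := Fin d) v₀ (m * 2 ^ m)
      simp only [Fintype.card_fin, Fintype.card_prod] at this
      exact_mod_cast this
    _ ≤ _ := sum_choose_mul_pow_le_exp hm hd
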